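/- arXiv:1904.05973 — 2 statements merged into one kernel-verified Lean document; each statement's English description precedes it below -/
import Mathlib

section
/- With notation as in the previous result, the derivative of the free energy along the one-parameter family satisfies d/dm F[ρ_∞(·; m)] = −β θ² (R(m) − m) · Var(ρ_∞(·; m)), where Var(ψ) = ∫ (x − ∫ x ψ dx)² ψ(x) dx. -/
open MeasureTheory

/-- Effective potential `V_eff(x; m, θ) = V(x) + (θ/2)(x−m)²`. -/
noncomputable def Veff (V : ℝ → ℝ) (θ m x : ℝ) : ℝ := V x + θ / 2 * (x - m) ^ 2

/-- Partition function `Z(m) = ∫ e^{−β V_eff(x; m, θ)} dx`. -/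
noncomputable def partitionZ (V : ℝ → ℝ) (β θ m : ℝ) : ℝ :=
  ∫ x : ℝ, Real.exp (-β * Veff V θ m x)

/-- The Gibbs density `ρ_∞(x; m) = Z(m)⁻¹ e^{−β(V(x) + (θ/2)(x−m)²)}`. -/
noncomputable def rhoInf (V : ℝ → ℝ) (β θ m : ℝ) : ℝ → ℝ := fun x =>
  Real.exp (-β * Veff V θ m x) / partitionZ V β θ m

/-- Self-consistency map `R(m) = ∫ x ρ_∞(x; m) dx`. -/
noncomputable def selfConsistencyR (V : ℝ → ℝ) (β θ m : ℝ) : ℝ :=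
  ∫ x : ℝ, x * rhoInf V β θ m x

/-- Variance `Var(ψ) = ∫ (x − ∫ x ψ dx)² ψ(x) dx` of `ρ_∞(·; m)`. -/
noncomputable def varRhoInf (V : ℝ → ℝ) (β θ m : ℝ) : ℝ :=
  ∫ x : ℝ, (x - selfConsistencyR V β θ m) ^ 2 * rhoInf V β θ m x

/-- Free energy functional
`F[ρ] = β⁻¹ ∫ ρ ln ρ + ∫ V ρ + (θ/2) ∫∫ ((x−y)²/2) ρ(x) ρ(y)`. -/
noncomputable def freeEnergy (V : ℝ → ℝ) (β θ : ℝ) (ρ : ℝ → ℝ) : ℝ :=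
  β⁻¹ * (∫ x : ℝ, ρ x * Real.log (ρ x)) + (∫ x : ℝ, V x * ρ x) +
    θ / 2 * ∫ x : ℝ, ∫ y : ℝ, (x - y) ^ 2 / 2 * ρ x * ρ y


/-! ### Auxiliary lemmas -/

section FreeEnergyAux

/-- Uniform domination of the Gibbs weight for parameters in a unit ball. -/
lemma exp_Veff_le (V : ℝ → ℝ) (β θ : ℝ) (hβ : 0 < β) (hθ : 0 < θ) (m t x : ℝ)
    (ht : |t - m| ≤ 1) :
    Real.exp (-β * Veff V θ t x) ≤
      Real.exp (β * θ / 2) *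
        (Real.exp (-β * Veff V θ (m + 1) x) + Real.exp (-β * Veff V θ (m - 1) x)) := by
  have htm := abs_le.mp ht
  have hβθ : 0 < β * θ := mul_pos hβ hθ
  rcases le_total m x with hx | hx
  · have h2 : (x - (m + 1)) ^ 2 ≤ 1 + (x - t) ^ 2 := by
      nlinarith [mul_nonneg (sub_nonneg.mpr hx) (by linarith : (0:ℝ) ≤ 1 - (t - m))]
    have h1 : -β * Veff V θ t x ≤ β * θ / 2 + -β * Veff V θ (m + 1) x := by
      unfold Veff; nlinarith [h2, hβθ]
    calc Real.exp (-β * Veff V θ t x)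
        ≤ Real.exp (β * θ / 2 + -β * Veff V θ (m + 1) x) := Real.exp_le_exp.mpr h1
      _ = Real.exp (β * θ / 2) * Real.exp (-β * Veff V θ (m + 1) x) := Real.exp_add _ _
      _ ≤ _ := by
          nlinarith [mul_pos (Real.exp_pos (β * θ / 2)) (Real.exp_pos (-β * Veff V θ (m - 1) x))]
  · have h2 : (x - (m - 1)) ^ 2 ≤ 1 + (x - t) ^ 2 := by
      nlinarith [mul_nonneg (sub_nonneg.mpr hx) (by linarith : (0:ℝ) ≤ 1 + (t - m))]
    have h1 : -β * Veff V θ t x ≤ β * θ / 2 + -β * Veff V θ (m - 1) x := by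
      unfold Veff; nlinarith [h2, hβθ]
    calc Real.exp (-β * Veff V θ t x)
        ≤ Real.exp (β * θ / 2 + -β * Veff V θ (m - 1) x) := Real.exp_le_exp.mpr h1
      _ = Real.exp (β * θ / 2) * Real.exp (-β * Veff V θ (m - 1) x) := Real.exp_add _ _
      _ ≤ _ := by
          nlinarith [mul_pos (Real.exp_pos (β * θ / 2)) (Real.exp_pos (-β * Veff V θ (m + 1) x))]

lemma continuous_expVeff (V : ℝ → ℝ) (β θ : ℝ) (hVc : Continuous V) (t : ℝ) :
    Continuous fun x : ℝ => Real.exp (-β * Veff V θ t x) := by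
  unfold Veff; fun_prop

/-- Differentiation under the integral sign for weighted Gibbs integrals. -/
lemma hasDerivAt_weighted (V : ℝ → ℝ) (β θ : ℝ) (hβ : 0 < β) (hθ : 0 < θ)
    (hVc : Continuous V) (f : ℝ → ℝ) (hfc : Continuous f) (m : ℝ)
    (hf : ∀ m' : ℝ, Integrable (fun x : ℝ => f x * Real.exp (-β * Veff V θ m' x)))
    (hfx : ∀ m' : ℝ, Integrable (fun x : ℝ => x * f x * Real.exp (-β * Veff V θ m' x))) :
    HasDerivAt (fun t => ∫ x : ℝ, f x * Real.exp (-β * Veff V θ t x))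
      (∫ x : ℝ, β * θ * (x - m) * f x * Real.exp (-β * Veff V θ m x)) m := by
  set F : ℝ → ℝ → ℝ := fun t x => f x * Real.exp (-β * Veff V θ t x) with hF
  set F' : ℝ → ℝ → ℝ := fun t x => β * θ * (x - t) * f x * Real.exp (-β * Veff V θ t x) with hF'
  set B : ℝ → ℝ := fun x => β * θ * Real.exp (β * θ / 2) *
      ((|x| + |m| + 1) * |f x| *
        (Real.exp (-β * Veff V θ (m + 1) x) + Real.exp (-β * Veff V θ (m - 1) x))) with hB
  have habs : ∀ t : ℝ, Integrable (fun x : ℝ => |x| * |f x| * Real.exp (-β * Veff V θ t x)) := by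
    intro t
    refine (hfx t).abs.congr (Filter.Eventually.of_forall fun x => ?_)
    simp [abs_mul, abs_of_pos (Real.exp_pos _)]
  have habs' : ∀ t : ℝ, Integrable (fun x : ℝ => |f x| * Real.exp (-β * Veff V θ t x)) := by
    intro t
    refine (hf t).abs.congr (Filter.Eventually.of_forall fun x => ?_)
    simp [abs_mul, abs_of_pos (Real.exp_pos _)]
  have hBint : Integrable B := by
    have hsum : Integrable (fun x : ℝ =>
        (|x| * |f x| * Real.exp (-β * Veff V θ (m + 1) x)
          + |x| * |f x| * Real.exp (-β * Veff V θ (m - 1) x))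
        + ((|m| + 1) * (|f x| * Real.exp (-β * Veff V θ (m + 1) x))
          + (|m| + 1) * (|f x| * Real.exp (-β * Veff V θ (m - 1) x)))) :=
      ((habs (m + 1)).add (habs (m - 1))).add
        (((habs' (m + 1)).const_mul _).add ((habs' (m - 1)).const_mul _))
    exact (hsum.const_mul (β * θ * Real.exp (β * θ / 2))).congr
      (Filter.Eventually.of_forall fun x => by rw [hB]; ring)
  have key := hasDerivAt_integral_of_dominated_loc_of_deriv_le (F := F) (F' := F')
    (bound := B) (μ := (volume : Measure ℝ)) (x₀ := m) (s := Metric.ball m 1) (Metric.ball_mem_nhds m one_pos)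
    (Filter.Eventually.of_forall fun t =>
      (hfc.mul (continuous_expVeff V β θ hVc t)).aestronglyMeasurable)
    (hf m)
    ((((continuous_const.mul (continuous_id.sub continuous_const)).mul hfc).mul
      (continuous_expVeff V β θ hVc m)).aestronglyMeasurable)
    (Filter.Eventually.of_forall fun x => ?_) hBint
    (Filter.Eventually.of_forall fun x => ?_)
  · exact key.2
  · -- bound
    intro t ht
    have hdist : |t - m| ≤ 1 := by
      rw [Metric.mem_ball, Real.dist_eq] at ht; exact ht.le
    have hle := exp_Veff_le V β θ hβ hθ m t x hdist
    have h1 : |x - t| ≤ |x| + |m| + 1 := by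
      have h2 : |x - t| ≤ |x| + |t| := by
        rw [sub_eq_add_neg]; simpa using abs_add_le x (-t)
      have h3 : |t| ≤ |m| + 1 := by
        have := abs_le.mp hdist
        exact abs_le.mpr ⟨by linarith [neg_abs_le m], by linarith [le_abs_self m]⟩
      linarith
    have hnorm : ‖F' t x‖ = β * θ * |x - t| * |f x| * Real.exp (-β * Veff V θ t x) := by
      rw [hF']
      simp only [Real.norm_eq_abs, abs_mul, abs_of_pos hβ, abs_of_pos hθ,
        abs_of_pos (Real.exp_pos _)]
    rw [hnorm]
    calc β * θ * |x - t| * |f x| * Real.exp (-β * Veff V θ t x)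
        ≤ (β * θ * (|x| + |m| + 1) * |f x|) *
          (Real.exp (β * θ / 2) *
            (Real.exp (-β * Veff V θ (m + 1) x) + Real.exp (-β * Veff V θ (m - 1) x))) := by
          apply mul_le_mul _ hle (Real.exp_pos _).le (by positivity)
          exact mul_le_mul_of_nonneg_right
            (mul_le_mul_of_nonneg_left h1 (by positivity)) (abs_nonneg _)
      _ = B x := by rw [hB]; ring
  · -- differentiability
    intro t _
    have h1 : HasDerivAt (fun t : ℝ => x - t) (-1) t := (hasDerivAt_id t).const_sub x
    have h2 := h1.pow 2
    have h3 := (h2.const_mul (θ / 2)).const_add (V x)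
    have h4 : HasDerivAt (fun t : ℝ => -β * Veff V θ t x) (β * θ * (x - t)) t := by
      unfold Veff
      refine (h3.const_mul (-β)).congr_deriv ?_
      ring
    have h5 := (h4.exp).const_mul (f x)
    refine h5.congr_deriv ?_
    rw [hF']; ring

/-- The value of a Gibbs integral against `c0 + c1 x + c2 x² + c3 V x`. -/
lemma master (V : ℝ → ℝ) (β θ : ℝ)
    (hI : ∀ m' : ℝ, Integrable (fun x : ℝ => Real.exp (-β * Veff V θ m' x)))
    (hI1 : ∀ m' : ℝ, Integrable (fun x : ℝ => x * Real.exp (-β * Veff V θ m' x)))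
    (hI2 : ∀ m' : ℝ, Integrable (fun x : ℝ => x ^ 2 * Real.exp (-β * Veff V θ m' x)))
    (hIV : ∀ m' : ℝ, Integrable (fun x : ℝ => V x * Real.exp (-β * Veff V θ m' x)))
    (t c0 c1 c2 c3 : ℝ) :
    ∫ x : ℝ, (c0 + c1 * x + c2 * x ^ 2 + c3 * V x) * Real.exp (-β * Veff V θ t x)
      = c0 * partitionZ V β θ t
        + c1 * (∫ x : ℝ, x * Real.exp (-β * Veff V θ t x))
        + c2 * (∫ x : ℝ, x ^ 2 * Real.exp (-β * Veff V θ t x))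
        + c3 * (∫ x : ℝ, V x * Real.exp (-β * Veff V θ t x)) := by
  have hre : (fun x : ℝ => (c0 + c1 * x + c2 * x ^ 2 + c3 * V x) * Real.exp (-β * Veff V θ t x))
      = fun x : ℝ => c0 * Real.exp (-β * Veff V θ t x)
        + (c1 * (x * Real.exp (-β * Veff V θ t x))
        + (c2 * (x ^ 2 * Real.exp (-β * Veff V θ t x))
        + c3 * (V x * Real.exp (-β * Veff V θ t x)))) := funext fun x => by ring
  set E : ℝ → ℝ := fun x => Real.exp (-β * Veff V θ t x) with hE
  have h1 : Integrable (fun x : ℝ => c1 * (x * E x)) := (hI1 t).const_mul c1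
  have h2 : Integrable (fun x : ℝ => c2 * (x ^ 2 * E x)) := (hI2 t).const_mul c2
  have h3 : Integrable (fun x : ℝ => c3 * (V x * E x)) := (hIV t).const_mul c3
  have h23 : Integrable (fun x : ℝ => c2 * (x ^ 2 * E x) + c3 * (V x * E x)) := h2.add h3
  have h123 : Integrable (fun x : ℝ =>
      c1 * (x * E x) + (c2 * (x ^ 2 * E x) + c3 * (V x * E x))) := h1.add h23
  rw [hre, integral_add ((hI t).const_mul c0) h123, integral_add h1 h23,
    integral_add h2 h3, integral_const_mul, integral_const_mul, integral_const_mul,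
    integral_const_mul, partitionZ]
  ring

section
variable (V : ℝ → ℝ) (β θ : ℝ)
  (hI : ∀ m' : ℝ, Integrable (fun x : ℝ => Real.exp (-β * Veff V θ m' x)))
  (hI1 : ∀ m' : ℝ, Integrable (fun x : ℝ => x * Real.exp (-β * Veff V θ m' x)))
  (hI2 : ∀ m' : ℝ, Integrable (fun x : ℝ => x ^ 2 * Real.exp (-β * Veff V θ m' x)))
  (hIV : ∀ m' : ℝ, Integrable (fun x : ℝ => V x * Real.exp (-β * Veff V θ m' x)))

include hI in
lemma partitionZ_pos (t : ℝ) : 0 < partitionZ V β θ t := by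
  rw [partitionZ]; exact integral_exp_pos (hI t)

include hI hI1 hI2 hIV in
lemma selfR_eq (t : ℝ) :
    selfConsistencyR V β θ t
      = (∫ x : ℝ, x * Real.exp (-β * Veff V θ t x)) / partitionZ V β θ t := by
  have hZ := (partitionZ_pos V β θ hI t).ne'
  rw [selfConsistencyR]
  have : (fun x : ℝ => x * rhoInf V β θ t x)
      = fun x : ℝ => (0 + (partitionZ V β θ t)⁻¹ * x + 0 * x ^ 2 + 0 * V x)
          * Real.exp (-β * Veff V θ t x) := by
    funext x; simp only [rhoInf]; field_simp; ring
  rw [this, master V β θ hI hI1 hI2 hIV]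
  field_simp
  ring

include hI hI1 hI2 hIV in
lemma var_eq (t : ℝ) :
    varRhoInf V β θ t
      = (∫ x : ℝ, x ^ 2 * Real.exp (-β * Veff V θ t x)) / partitionZ V β θ t
        - ((∫ x : ℝ, x * Real.exp (-β * Veff V θ t x)) / partitionZ V β θ t) ^ 2 := by
  have hZ := (partitionZ_pos V β θ hI t).ne'
  set R := selfConsistencyR V β θ t with hRdef
  rw [varRhoInf]
  have : (fun x : ℝ => (x - R) ^ 2 * rhoInf V β θ t x)
      = fun x : ℝ => (R ^ 2 / partitionZ V β θ t + (-2 * R / partitionZ V β θ t) * x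
          + (partitionZ V β θ t)⁻¹ * x ^ 2 + 0 * V x) * Real.exp (-β * Veff V θ t x) := by
    funext x; simp only [rhoInf]; field_simp; ring
  rw [this, master V β θ hI hI1 hI2 hIV, hRdef, selfR_eq V β θ hI hI1 hI2 hIV]
  field_simp
  ring

include hI hI1 hI2 hIV in
/-- Closed form of the free energy along the Gibbs family:
`F[ρ_∞(·;t)] = −β⁻¹ log Z(t) − (θ/2)(R(t) − t)²`. -/
lemma freeEnergy_eq (hβ : 0 < β) (t : ℝ) :
    freeEnergy V β θ (rhoInf V β θ t)
      = -β⁻¹ * Real.log (partitionZ V β θ t)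
        - θ / 2 * ((∫ x : ℝ, x * Real.exp (-β * Veff V θ t x)) / partitionZ V β θ t - t) ^ 2 := by
  have hZpos := partitionZ_pos V β θ hI t
  have hZ := hZpos.ne'
  set Z := partitionZ V β θ t with hZdef
  set N1 := ∫ x : ℝ, x * Real.exp (-β * Veff V θ t x) with hN1def
  set N2 := ∫ x : ℝ, x ^ 2 * Real.exp (-β * Veff V θ t x) with hN2def
  set IV := ∫ x : ℝ, V x * Real.exp (-β * Veff V θ t x) with hIVdef
  have ha : (∫ x : ℝ, rhoInf V β θ t x * Real.log (rhoInf V β θ t x))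
      = ((-(β * (θ/2) * t ^ 2) - Real.log Z)/Z) * Z + (β * θ * t / Z) * N1
        + (-(β * θ)/(2*Z)) * N2 + (-β/Z) * IV := by
    have : (fun x : ℝ => rhoInf V β θ t x * Real.log (rhoInf V β θ t x))
        = fun x : ℝ => ((-(β * (θ/2) * t ^ 2) - Real.log Z)/Z + (β * θ * t / Z) * x
            + (-(β * θ)/(2*Z)) * x ^ 2 + (-β/Z) * V x) * Real.exp (-β * Veff V θ t x) := by
      funext x
      simp only [rhoInf, ← hZdef]
      rw [Real.log_div (Real.exp_ne_zero _) hZ, Real.log_exp]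
      simp only [Veff]
      field_simp
      ring
    rw [this, master V β θ hI hI1 hI2 hIV, ← hZdef, ← hN1def, ← hN2def, ← hIVdef]
  have hb : (∫ x : ℝ, V x * rhoInf V β θ t x)
      = 0 * Z + 0 * N1 + 0 * N2 + Z⁻¹ * IV := by
    have : (fun x : ℝ => V x * rhoInf V β θ t x)
        = fun x : ℝ => (0 + 0 * x + 0 * x ^ 2 + Z⁻¹ * V x) * Real.exp (-β * Veff V θ t x) := by
      funext x; simp only [rhoInf, ← hZdef]; field_simp; ring
    rw [this, master V β θ hI hI1 hI2 hIV, ← hZdef, ← hN1def, ← hN2def, ← hIVdef]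
  have hc : ∀ x : ℝ, (∫ y : ℝ, (x - y) ^ 2 / 2 * rhoInf V β θ t x * rhoInf V β θ t y)
      = (x ^ 2 * rhoInf V β θ t x / (2 * Z)) * Z + (-(x * rhoInf V β θ t x) / Z) * N1
        + (rhoInf V β θ t x / (2 * Z)) * N2 + 0 * IV := by
    intro x
    have : (fun y : ℝ => (x - y) ^ 2 / 2 * rhoInf V β θ t x * rhoInf V β θ t y)
        = fun y : ℝ => (x ^ 2 * rhoInf V β θ t x / (2 * Z)
            + (-(x * rhoInf V β θ t x) / Z) * y
            + (rhoInf V β θ t x / (2 * Z)) * y ^ 2 + 0 * V y)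
          * Real.exp (-β * Veff V θ t y) := by
      funext y
      simp only [rhoInf, ← hZdef]
      field_simp
      ring
    rw [this, master V β θ hI hI1 hI2 hIV, ← hZdef, ← hN1def, ← hN2def, ← hIVdef]
  have hd : (∫ x : ℝ, ∫ y : ℝ, (x - y) ^ 2 / 2 * rhoInf V β θ t x * rhoInf V β θ t y)
      = (N2/(2*Z^2)) * Z + (-(N1/Z^2)) * N1 + (1/(2*Z)) * N2 + 0 * IV := by
    simp only [hc]
    have : (fun x : ℝ => (x ^ 2 * rhoInf V β θ t x / (2 * Z)) * Z
          + (-(x * rhoInf V β θ t x) / Z) * N1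
          + (rhoInf V β θ t x / (2 * Z)) * N2 + 0 * IV)
        = fun x : ℝ => (N2/(2*Z^2) + (-(N1/Z^2)) * x + (1/(2*Z)) * x ^ 2 + 0 * V x)
          * Real.exp (-β * Veff V θ t x) := by
      funext x
      simp only [rhoInf, ← hZdef]
      field_simp
      ring
    rw [this, master V β θ hI hI1 hI2 hIV, ← hZdef, ← hN1def, ← hN2def, ← hIVdef]
  rw [freeEnergy, ha, hb, hd]
  have hβ' := hβ.ne'
  field_simp
  ring

end

end FreeEnergyAux

/-- Derivative of the free energy along the one-parameter family of Gibbs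
densities: `d/dm F[ρ_∞(·;m)] = −β θ² (R(m) − m) Var(ρ_∞(·;m))`. -/
theorem freeEnergy_deriv_along_family (V : ℝ → ℝ) (β θ m : ℝ)
    (hβ : 0 < β) (hθ : 0 < θ) (hV : ContDiff ℝ (⊤ : ℕ∞) V)
    (hI : ∀ m' : ℝ, Integrable (fun x : ℝ => Real.exp (-β * Veff V θ m' x)))
    (hI1 : ∀ m' : ℝ, Integrable (fun x : ℝ => x * Real.exp (-β * Veff V θ m' x)))
    (hI2 : ∀ m' : ℝ, Integrable (fun x : ℝ => x ^ 2 * Real.exp (-β * Veff V θ m' x)))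
    (hIV : ∀ m' : ℝ, Integrable (fun x : ℝ => V x * Real.exp (-β * Veff V θ m' x))) :
    HasDerivAt (fun m' => freeEnergy V β θ (rhoInf V β θ m'))
      (-β * θ ^ 2 * (selfConsistencyR V β θ m - m) * varRhoInf V β θ m) m := by
  have hVc : Continuous V := hV.continuous
  -- derivative of Z
  have hZd0 := hasDerivAt_weighted V β θ hβ hθ hVc (fun _ => (1:ℝ)) continuous_const m
    (fun m' => by simpa using hI m') (fun m' => by simpa using hI1 m')
  simp only [one_mul, mul_one] at hZd0
  -- derivative of N1
  have hN1d0 := hasDerivAt_weighted V β θ hβ hθ hVc (fun x => x) continuous_id m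
    (fun m' => hI1 m')
    (fun m' => (hI2 m').congr (Filter.Eventually.of_forall fun x => by ring))
  set Z := partitionZ V β θ m with hZdef
  set N1 := ∫ x : ℝ, x * Real.exp (-β * Veff V θ m x) with hN1def
  set N2 := ∫ x : ℝ, x ^ 2 * Real.exp (-β * Veff V θ m x) with hN2def
  have hZpos : 0 < Z := partitionZ_pos V β θ hI m
  have hZne : Z ≠ 0 := hZpos.ne'
  have hZne' : (∫ x : ℝ, Real.exp (-β * Veff V θ m x)) ≠ 0 := by
    rw [← partitionZ]; exact hZne
  -- compute the derivative values
  have hZval : (∫ x : ℝ, β * θ * (x - m) * Real.exp (-β * Veff V θ m x))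
      = β * θ * N1 - β * θ * m * Z := by
    have : (fun x : ℝ => β * θ * (x - m) * Real.exp (-β * Veff V θ m x))
        = fun x : ℝ => (-(β * θ * m) + (β * θ) * x + 0 * x ^ 2 + 0 * V x)
          * Real.exp (-β * Veff V θ m x) := funext fun x => by ring
    rw [this, master V β θ hI hI1 hI2 hIV, ← hZdef, ← hN1def]
    ring
  have hN1val : (∫ x : ℝ, β * θ * (x - m) * x * Real.exp (-β * Veff V θ m x))
      = β * θ * N2 - β * θ * m * N1 := by
    have : (fun x : ℝ => β * θ * (x - m) * x * Real.exp (-β * Veff V θ m x))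
        = fun x : ℝ => (0 + (-(β * θ * m)) * x + (β * θ) * x ^ 2 + 0 * V x)
          * Real.exp (-β * Veff V θ m x) := funext fun x => by ring
    rw [this, master V β θ hI hI1 hI2 hIV, ← hN1def, ← hN2def]
    ring
  rw [hZval] at hZd0
  rw [hN1val] at hN1d0
  -- assemble the derivative of the closed-form free energy
  have h3 := hZd0.log hZne'
  have h4 := ((hN1d0.div hZd0 hZne').sub (hasDerivAt_id m)).pow 2
  have h6 := ((h3.const_mul (-β⁻¹)).sub (h4.const_mul (θ / 2)))
  have hfun : (fun m' => freeEnergy V β θ (rhoInf V β θ m'))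
      = fun t => -β⁻¹ * Real.log (∫ x : ℝ, Real.exp (-β * Veff V θ t x))
        - θ / 2 * ((∫ x : ℝ, x * Real.exp (-β * Veff V θ t x))
            / (∫ x : ℝ, Real.exp (-β * Veff V θ t x)) - t) ^ 2 := by
    funext t
    rw [freeEnergy_eq V β θ hI hI1 hI2 hIV hβ t]
    simp only [partitionZ]
  rw [hfun]
  have hZint : (∫ x : ℝ, Real.exp (-β * Veff V θ m x)) = Z := hZdef.symm
  refine h6.congr_deriv ?_
  rw [hZint, selfR_eq V β θ hI hI1 hI2 hIV m, var_eq V β θ hI hI1 hI2 hIV m]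
  simp only [Pi.sub_apply, Pi.div_apply, hZint, ← hZdef, ← hN1def, ← hN2def, id_eq, pow_one, Nat.cast_ofNat]
  have hβne := hβ.ne'
  field_simp
  have hZinv : Z * Z⁻¹ = 1 := mul_inv_cancel₀ hZne
  linear_combination (N1^3*β*θ - Z*N1*β*θ*N2 - Z*N1^2*m*β*θ + Z^2*N1 + Z^2*m*β*θ*N2 - Z^3*m) * hZinv
end

section
/- (Error bound for the discrete stationary state) Let H be a negative selfadjoint operator on L²(ℝ) with one-dimensional kernel spanned by a positive function φ₀ with ∫ φ₀ · φ₀ > 0, let S_d be a finite-dimensional subspace with orthogonal projection Π onto S_d, and let û := argmax{ ⟨Hψ, ψ⟩ : ψ ∈ S_d, ∫ φ₀ ψ = 1 }. Then, provided ∫ φ₀ · Πφ₀ ≠ 0, −⟨H(û − φ₀), û − φ₀⟩ ≤ |∫ φ₀ Πφ₀|^{-2} · ( −⟨H(Πφ₀ − φ₀), Πφ₀ − φ₀⟩ ). -/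
/-!
Since `H φ₀ = 0` and `H` is symmetric, the energy `-⟪H(v - φ₀), v - φ₀⟫` of the error equals
`-⟪H v, v⟫`. Testing the maximality of `uh` with the rescaled projection
`Πφ₀ / ⟪φ₀, Πφ₀⟫`, which lies on the constraint slice, and using that the quadratic form is
homogeneous of degree two gives the bound.
-/

open MeasureTheory RealInnerProductSpace

namespace LinearMap

variable {E : Type*} [NormedAddCommGroup E] [InnerProductSpace ℝ E] {T : E →ₗ[ℝ] E}

theorem inner_map_smul_smul (T : E →ₗ[ℝ] E) (c : ℝ) (v : E) :
    ⟪T (c • v), c • v⟫ = c ^ 2 * ⟪T v, v⟫ := by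
  simp only [map_smul, inner_smul_left, inner_smul_right, RCLike.conj_to_real]
  ring

namespace IsSymmetric

theorem inner_map_sub_of_map_eq_zero (hT : T.IsSymmetric) {φ : E} (hφ : T φ = 0) (v : E) :
    ⟪T (v - φ), v - φ⟫ = ⟪T v, v⟫ := by
  have hvφ : ⟪T v, φ⟫ = 0 := by rw [hT, hφ, inner_zero_right]
  simp only [map_sub, hφ, sub_zero, inner_sub_right, hvφ]

theorem neg_inner_map_sub_le_of_forall_le (hT : T.IsSymmetric) {φ u p : E}
    (hφ : T φ = 0) (S : Submodule ℝ E)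
    (hmax : ∀ ψ ∈ S, ⟪φ, ψ⟫ = 1 → ⟪T ψ, ψ⟫ ≤ ⟪T u, u⟫) (hp : p ∈ S) (hc : ⟪φ, p⟫ ≠ 0) :
    -⟪T (u - φ), u - φ⟫ ≤ (|⟪φ, p⟫| ^ 2)⁻¹ * -⟪T (p - φ), p - φ⟫ := by
  set c := ⟪φ, p⟫
  have hslice : ⟪φ, c⁻¹ • p⟫ = 1 := by rw [inner_smul_right, inv_mul_cancel₀ hc]
  have htest : (c ^ 2)⁻¹ * ⟪T p, p⟫ ≤ ⟪T u, u⟫ := by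
    simpa only [inner_map_smul_smul, inv_pow] using hmax _ (S.smul_mem _ hp) hslice
  rw [hT.inner_map_sub_of_map_eq_zero hφ, hT.inner_map_sub_of_map_eq_zero hφ, sq_abs]
  linarith

end IsSymmetric

end LinearMap

theorem discrete_stationary_state_error_bound_general
    (H : Lp ℝ 2 (volume : Measure ℝ) →L[ℝ] Lp ℝ 2 (volume : Measure ℝ))
    (hsa : IsSelfAdjoint H)
    (φ₀ : Lp ℝ 2 (volume : Measure ℝ))
    (hHφ₀ : H φ₀ = 0)
    (S : Submodule ℝ (Lp ℝ 2 (volume : Measure ℝ)))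
    [Submodule.HasOrthogonalProjection S]
    (uh : Lp ℝ 2 (volume : Measure ℝ))
    (hmax : ∀ ψ : Lp ℝ 2 (volume : Measure ℝ), ψ ∈ S → ⟪φ₀, ψ⟫ = 1 →
      ⟪H ψ, ψ⟫ ≤ ⟪H uh, uh⟫)
    (hproj : ⟪φ₀, (Submodule.orthogonalProjectionOnto S φ₀ : Lp ℝ 2 (volume : Measure ℝ))⟫ ≠ 0) :
    -⟪H (uh - φ₀), uh - φ₀⟫ ≤
      (|⟪φ₀, (Submodule.orthogonalProjectionOnto S φ₀ : Lp ℝ 2 (volume : Measure ℝ))⟫| ^ 2)⁻¹ *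
        (-⟪H ((Submodule.orthogonalProjectionOnto S φ₀ : Lp ℝ 2 (volume : Measure ℝ)) - φ₀),
            (Submodule.orthogonalProjectionOnto S φ₀ : Lp ℝ 2 (volume : Measure ℝ)) - φ₀⟫) :=
  hsa.isSymmetric.neg_inner_map_sub_le_of_forall_le hHφ₀ S hmax
    (Submodule.orthogonalProjectionOnto S φ₀).2 hproj

/-- Error bound for the discrete stationary state. Let `H` be a negative
selfadjoint operator on `L²(ℝ)` whose kernel is spanned by a (a.e.) positive
function `φ₀` with `⟨φ₀, φ₀⟩ > 0`, let `S` be a finite-dimensional subspace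
with orthogonal projection `Π`, and let `uh ∈ S` with `⟨φ₀, uh⟩ = 1` maximize
the quadratic form `⟨Hψ, ψ⟩` over `{ψ ∈ S : ⟨φ₀, ψ⟩ = 1}`. Then, provided
`⟨φ₀, Πφ₀⟩ ≠ 0`,
`−⟨H(uh − φ₀), uh − φ₀⟩ ≤ |⟨φ₀, Πφ₀⟩|⁻² (−⟨H(Πφ₀ − φ₀), Πφ₀ − φ₀⟩)`. -/
theorem discrete_stationary_state_error_bound
    (H : Lp ℝ 2 (volume : Measure ℝ) →L[ℝ] Lp ℝ 2 (volume : Measure ℝ))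
    (hsa : IsSelfAdjoint H)
    (hneg : ∀ v : Lp ℝ 2 (volume : Measure ℝ), ⟪H v, v⟫ ≤ 0)
    (φ₀ : Lp ℝ 2 (volume : Measure ℝ))
    (hφ₀pos : ∀ᵐ x : ℝ, 0 < φ₀ x)
    (hφ₀norm : 0 < ⟪φ₀, φ₀⟫)
    (hker : LinearMap.ker H.toLinearMap = Submodule.span ℝ {φ₀})
    (hHφ₀ : H φ₀ = 0)
    (S : Submodule ℝ (Lp ℝ 2 (volume : Measure ℝ))) [FiniteDimensional ℝ S]
    [Submodule.HasOrthogonalProjection S]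
    (uh : Lp ℝ 2 (volume : Measure ℝ)) (huhS : uh ∈ S) (huhc : ⟪φ₀, uh⟫ = 1)
    (hmax : ∀ ψ : Lp ℝ 2 (volume : Measure ℝ), ψ ∈ S → ⟪φ₀, ψ⟫ = 1 →
      ⟪H ψ, ψ⟫ ≤ ⟪H uh, uh⟫)
    (hproj : ⟪φ₀, (Submodule.orthogonalProjectionOnto S φ₀ : Lp ℝ 2 (volume : Measure ℝ))⟫ ≠ 0) :
    -⟪H (uh - φ₀), uh - φ₀⟫ ≤
      (|⟪φ₀, (Submodule.orthogonalProjectionOnto S φ₀ : Lp ℝ 2 (volume : Measure ℝ))⟫| ^ 2)⁻¹ *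
        (-⟪H ((Submodule.orthogonalProjectionOnto S φ₀ : Lp ℝ 2 (volume : Measure ℝ)) - φ₀),
            (Submodule.orthogonalProjectionOnto S φ₀ : Lp ℝ 2 (volume : Measure ℝ)) - φ₀⟫) :=
  discrete_stationary_state_error_bound_general H hsa φ₀ hHφ₀ S uh hmax hproj
end
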